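/- Let (E, ≤, c) be an enriched qoset and let s be a closure operator on E that absorbs ∼, i.e. [s(A)] = s(A) = s([A]) for all A ⊆ E. Let A ⊆ E and x ∈ E. Then x ∈ ex_{c*s} A if and only if there exists an s-closed subset V of E with x ∈ ex_c(A \ V). Moreover, if s is preinductive, then V can be chosen to be an s-copoint of x. -/
import Mathlib


/-- A preclosure operator on a set `E`: `A ⊆ c A` and `c` is monotone. -/
def IsPreclosure {E : Type*} (c : Set E → Set E) : Prop :=
  (∀ A : Set E, A ⊆ c A) ∧ ∀ ⦃A B : Set E⦄, A ⊆ B → c A ⊆ c B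

/-- The convolution product of two preclosure operators. -/
def cnv {E : Type*} (c s : Set E → Set E) : Set E → Set E :=
  fun A => ⋂ B : Set E, c (A ∩ B) ∪ s (A \ B)

/-- The lower closure `↓A` of a subset of a qoset. -/
def dcl {E : Type*} [Preorder E] (A : Set E) : Set E := {x | ∃ a ∈ A, x ≤ a}

/-- Order-equivalence `x ∼ y` in a qoset. -/
def eqv {E : Type*} [Preorder E] (x y : E) : Prop := x ≤ y ∧ y ≤ x

/-- The order-equivalence class `[x]` of `x`. -/
def cls {E : Type*} [Preorder E] (x : E) : Set E := {y | eqv y x}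

/-- The order-saturation `[A]` of a subset `A`. -/
def clsSet {E : Type*} [Preorder E] (A : Set E) : Set E := {y | ∃ a ∈ A, eqv y a}

/-- The set of `c`-extreme points of `A`: points `x ∈ A` with `x ∉ c (A \ [x])`. -/
def exC {E : Type*} [Preorder E] (c : Set E → Set E) (A : Set E) : Set E :=
  {x | x ∈ A ∧ x ∉ c (A \ cls x)}

/-- `V` is an `s`-copoint of `x`: a maximal `s`-closed subset not containing `x`. -/
def IsCopoint {E : Type*} (s : Set E → Set E) (x : E) (V : Set E) : Prop :=
  s V = V ∧ x ∉ V ∧ ∀ W : Set E, s W = W → x ∉ W → V ⊆ W → W = V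

/-- `s` is preinductive: every `s`-closed subset not containing `x` is contained in some
`s`-copoint of `x`. -/
def Preinductive {E : Type*} (s : Set E → Set E) : Prop :=
  ∀ (x : E) (V : Set E), s V = V → x ∉ V → ∃ W : Set E, V ⊆ W ∧ IsCopoint s x W

/-- In an enriched qoset `(E, ≤, c)`, if `s` is a closure operator absorbing `∼`, then
`x ∈ ex_{c*s} A` iff `x ∈ ex_c (A \ V)` for some `s`-closed `V`; if `s` is preinductive,
`V` can be chosen to be an `s`-copoint of `x`. -/
theorem extreme_points_of_convolution {E : Type*} [Preorder E] (c s : Set E → Set E)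
    (hc : IsPreclosure c) (habs : ∀ A : Set E, dcl (c A) = c A)
    (hs : IsPreclosure s) (hsid : ∀ A : Set E, s (s A) = s A)
    (hsabs : ∀ A : Set E, clsSet (s A) = s A ∧ s (clsSet A) = s A)
    (A : Set E) (x : E) :
    (x ∈ exC (cnv c s) A ↔ ∃ V : Set E, s V = V ∧ x ∈ exC c (A \ V)) ∧
    (Preinductive s → (x ∈ exC (cnv c s) A →
      ∃ V : Set E, IsCopoint s x V ∧ x ∈ exC c (A \ V))) := by
  obtain ⟨hsub, hmono⟩ := hc
  obtain ⟨hssub, hsmono⟩ := hs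
  have main : x ∈ exC (cnv c s) A ↔ ∃ V : Set E, s V = V ∧ x ∈ exC c (A \ V) := by
    constructor
    · rintro ⟨hxA, hx⟩
      simp only [cnv, Set.mem_iInter, Set.mem_union, not_forall] at hx
      push_neg at hx
      obtain ⟨B, h1, h2⟩ := hx
      refine ⟨s ((A \ cls x) \ B), hsid _, ⟨hxA, h2⟩, ?_⟩
      intro hmem
      apply h1
      refine hmono ?_ hmem
      rintro y ⟨⟨hyA, hyV⟩, hyx⟩
      refine ⟨⟨hyA, hyx⟩, ?_⟩
      by_contra hyB
      exact hyV (hssub _ ⟨⟨hyA, hyx⟩, hyB⟩)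
    · rintro ⟨V, hV, ⟨hxA, hxV⟩, hx⟩
      refine ⟨hxA, ?_⟩
      simp only [cnv, Set.mem_iInter, Set.mem_union, not_forall]
      push_neg
      refine ⟨Vᶜ, ?_, ?_⟩
      · intro h
        apply hx
        refine hmono ?_ h
        rintro y ⟨⟨hyA, hyx⟩, hyB⟩
        exact ⟨⟨hyA, fun h => hyB h⟩, hyx⟩
      · intro h
        apply hxV
        rw [← hV]
        refine hsmono ?_ h
        rintro y ⟨⟨hyA, hyx⟩, hyB⟩
        simpa using hyB
  refine ⟨main, fun hpre hx => ?_⟩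
  obtain ⟨V, hV, ⟨hxAV, hxc⟩⟩ := main.mp hx
  obtain ⟨W, hVW, hW⟩ := hpre x V hV hxAV.2
  refine ⟨W, hW, ⟨⟨hxAV.1, hW.2.1⟩, ?_⟩⟩
  intro hmem
  apply hxc
  refine hmono ?_ hmem
  rintro y ⟨⟨hyA, hyW⟩, hyx⟩
  exact ⟨⟨hyA, fun h => hyW (hVW h)⟩, hyx⟩
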